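/- Let n ≥ 1 and f₀ ∈ L¹(ℝ) with ∫_ℝ (1+z²)^{(n+1)/2} |f₀(z)| dz < ∞, satisfying ∫_ℝ z^k f₀(z) dz = 0 for all 0 ≤ k < n. Then for every 0 ≤ i ≤ n and every ζ ∈ ℝ, the i-th derivative of the Fourier transform of f₀ satisfies |∂_ζ^i f̂₀(ζ)| ≤ C |ζ|^{n−i} ‖z^n f₀(z)‖_{L¹}, for a constant C depending only on n. -/

import Mathlib

/-!
Rescaling Mathlib's Fourier transform gives `∂^i f̂₀(ζ) = ∫ (-iz)^i f₀(z) e^{-iζz} dz`. Since the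
moments of `f₀` of order `< n` vanish, subtracting from `e^{-iζz}` its Taylor polynomial of degree
`< n - i` does not change this integral, and the Taylor remainder of `exp` on the imaginary axis is
at most `|ζz|^(n-i) / (n-i)!`. Hence the bound holds with `C = 1`.
-/

open MeasureTheory

noncomputable section

/-- The Fourier transform `f̂₀(ζ) = ∫ f₀(z) e^{-iζz} dz`. -/
def fourierHat (f : ℝ → ℝ) (ζ : ℝ) : ℂ :=
  ∫ z : ℝ, (f z : ℂ) * Complex.exp (-Complex.I * ζ * z)

open Complex Finset Real FourierTransform
open scoped Nat

def expRemainder (m : ℕ) (w : ℂ) : ℂ :=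
  exp w - ∑ k ∈ range m, w ^ k / k !

theorem hasDerivAt_sum_range_pow_div_factorial (m : ℕ) (w : ℂ) :
    HasDerivAt (fun w : ℂ => ∑ k ∈ range (m + 1), w ^ k / k !)
      (∑ k ∈ range m, w ^ k / k !) w := by
  induction m with
  | zero => simpa using hasDerivAt_const w (1 : ℂ)
  | succ m ih =>
    simp_rw [sum_range_succ _ (m + 1)]
    refine (ih.add ((hasDerivAt_pow (m + 1) w).div_const ((m + 1)! : ℂ))).congr_deriv ?_
    rw [Nat.add_sub_cancel, Nat.factorial_succ, Nat.cast_mul, sum_range_succ _ m]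
    field_simp

theorem hasDerivAt_expRemainder_succ (m : ℕ) (w : ℂ) :
    HasDerivAt (expRemainder (m + 1)) (expRemainder m w) w :=
  (hasDerivAt_exp w).sub (hasDerivAt_sum_range_pow_div_factorial m w)

theorem expRemainder_succ_zero (m : ℕ) : expRemainder (m + 1) 0 = 0 := by
  simp [expRemainder, sum_range_succ']

theorem norm_expRemainder_le {w : ℂ} (hw : w.re ≤ 0) (m : ℕ) :
    ‖expRemainder m w‖ ≤ ‖w‖ ^ m / m ! := by
  induction m generalizing w with
  | zero => simpa [expRemainder, norm_exp] using hw
  | succ m ih =>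
    have hderiv (s : ℝ) : HasDerivAt (fun s : ℝ => expRemainder (m + 1) (s * w))
        (expRemainder m (s * w) * w) s := by
      exact (hasDerivAt_expRemainder_succ m (s * w)).comp s
        (by simpa using ((hasDerivAt_id (s : ℂ)).mul_const w).comp_ofReal)
    have hbarrier (s : ℝ) : HasDerivAt (fun s : ℝ => (s * ‖w‖) ^ (m + 1) / (m + 1)!)
        ((s * ‖w‖) ^ m * ‖w‖ / m !) s := by
      refine (((hasDerivAt_id s).mul_const ‖w‖).pow (m + 1)).div_const _ |>.congr_deriv ?_
      rw [Nat.add_sub_cancel, Nat.factorial_succ, Nat.cast_mul]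
      field_simp
      simp only [id]
      ring
    have hderiv_le (s : ℝ) (hs : s ∈ Set.Ico 0 1) :
        ‖expRemainder m (s * w) * w‖ ≤ (s * ‖w‖) ^ m * ‖w‖ / m ! :=
      calc ‖expRemainder m (s * w) * w‖ ≤ ‖(s : ℂ) * w‖ ^ m / m ! * ‖w‖ := by
            rw [norm_mul]
            gcongr
            exact ih (by simpa using mul_nonpos_of_nonneg_of_nonpos hs.1 hw)
        _ = (s * ‖w‖) ^ m * ‖w‖ / m ! := by
            rw [norm_mul, norm_real, Real.norm_of_nonneg hs.1]
            ring
    simpa using image_norm_le_of_norm_deriv_right_le_deriv_boundary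
      (fun s _ => (hderiv s).continuousAt.continuousWithinAt)
      (fun s _ => (hderiv s).hasDerivWithinAt) (by simp [expRemainder_succ_zero]) hbarrier
      hderiv_le (Set.right_mem_Icc.2 zero_le_one)

theorem fourierHat_eq_fourier (f : ℝ → ℝ) (ξ : ℝ) :
    fourierHat f ξ = 𝓕 (fun x => (f x : ℂ)) ((2 * π)⁻¹ * ξ) := by
  rw [fourierHat, Real.fourier_real_eq_integral_exp_smul]
  congr 1 with x
  rw [smul_eq_mul, mul_comm]
  congr 2
  push_cast
  field_simp

theorem iteratedDeriv_fourierHat {f : ℝ → ℝ} {i : ℕ}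
    (hf : ∀ j ≤ i, Integrable (fun x => x ^ j * f x)) (ζ : ℝ) :
    iteratedDeriv i (fourierHat f) ζ = ∫ x : ℝ, (-I * x) ^ i * f x * exp (-I * ζ * x) := by
  have hg (j : ℕ) (hj : (j : ℕ∞) ≤ i) : Integrable (fun x : ℝ => x ^ j • (f x : ℂ)) := by
    simpa using (hf j (by exact_mod_cast hj)).ofReal (𝕜 := ℂ)
  have hcd : ContDiff ℝ i (𝓕 fun x => (f x : ℂ)) :=
    Real.contDiff_fourier fun j hj => by simpa using (hg j hj).norm
  rw [funext (fourierHat_eq_fourier f), iteratedDeriv_comp_const_smul hcd,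
    Real.iteratedDeriv_fourier hg le_rfl]
  dsimp only
  rw [Real.fourier_real_eq_integral_exp_smul, ← integral_smul]
  congr 1 with x
  simp only [smul_eq_mul, Complex.real_smul]
  push_cast
  have hπ : (π : ℂ) ≠ 0 := ofReal_ne_zero.2 pi_ne_zero
  have hx : (2 * (π : ℂ))⁻¹ ^ i * (-2 * π * I * x) ^ i = (-I * x) ^ i := by
    rw [← mul_pow]
    field_simp
  have hζ : -2 * π * x * ((2 * (π : ℂ))⁻¹ * ζ) * I = -I * ζ * x := by
    field_simp
  rw [hζ, ← hx]
  ring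

theorem abs_pow_le_one_add_sq_rpow {k : ℕ} {s : ℝ} (hk : (k : ℝ) ≤ 2 * s) (z : ℝ) :
    |z| ^ k ≤ (1 + z ^ 2) ^ s := by
  have hz : |z| ≤ (1 + z ^ 2) ^ (1 / 2 : ℝ) := by
    rw [← Real.sqrt_eq_rpow, ← Real.sqrt_sq_eq_abs]
    exact Real.sqrt_le_sqrt (by linarith)
  calc |z| ^ k ≤ ((1 + z ^ 2) ^ (1 / 2 : ℝ)) ^ k := by gcongr
    _ = (1 + z ^ 2) ^ ((k : ℝ) / 2) := by
      rw [← Real.rpow_mul_natCast (by positivity)]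
      ring_nf
    _ ≤ (1 + z ^ 2) ^ s :=
      Real.rpow_le_rpow_of_exponent_le (by nlinarith) (by linarith)

theorem integrable_pow_mul_of_integrable_weight {f : ℝ → ℝ} {k : ℕ} {s : ℝ}
    (hf : AEStronglyMeasurable f) (hw : Integrable (fun z => (1 + z ^ 2) ^ s * |f z|))
    (hk : (k : ℝ) ≤ 2 * s) : Integrable (fun z => z ^ k * f z) := by
  refine hw.mono' ((continuous_pow k).aestronglyMeasurable.mul hf) (.of_forall fun z => ?_)
  rw [norm_mul, norm_pow, Real.norm_eq_abs, Real.norm_eq_abs]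
  exact mul_le_mul_of_nonneg_right (abs_pow_le_one_add_sq_rpow hk z) (abs_nonneg _)

section Moments

variable {f : ℝ → ℝ} {i m : ℕ}

theorem integrable_sum_pow_mul (hint : ∀ j < i + m, Integrable (fun x => x ^ j * f x))
    (c : ℕ → ℂ) :
    Integrable (fun x : ℝ => ∑ k ∈ range m, c k * ((x ^ (i + k) * f x : ℝ) : ℂ)) :=
  integrable_finsetSum _ fun k hk =>
    ((hint (i + k) (by simpa using mem_range.1 hk)).ofReal).const_mul (c k)

theorem integral_sum_pow_mul_eq_zero (hint : ∀ j < i + m, Integrable (fun x => x ^ j * f x))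
    (hmom : ∀ j < i + m, ∫ x, x ^ j * f x = 0) (c : ℕ → ℂ) :
    ∫ x : ℝ, ∑ k ∈ range m, c k * ((x ^ (i + k) * f x : ℝ) : ℂ) = 0 := by
  refine (integral_finsetSum _ fun k hk =>
    ((hint (i + k) (by simpa using mem_range.1 hk)).ofReal).const_mul (c k)).trans ?_
  refine sum_eq_zero fun k hk => ?_
  rw [integral_const_mul, integral_ofReal, hmom (i + k) (by simpa using mem_range.1 hk)]
  simp

end Moments

theorem norm_iteratedDeriv_fourierHat_le {f : ℝ → ℝ} {n i : ℕ} (hi : i ≤ n)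
    (hint : ∀ k ≤ n, Integrable (fun x => x ^ k * f x))
    (hmom : ∀ k < n, ∫ x, x ^ k * f x = 0) (ζ : ℝ) :
    ‖iteratedDeriv i (fourierHat f) ζ‖ ≤ |ζ| ^ (n - i) / (n - i)! * ∫ x, |x ^ n * f x| := by
  obtain ⟨m, rfl⟩ := Nat.exists_eq_add_of_le hi
  rw [Nat.add_sub_cancel_left]
  set c : ℕ → ℂ := fun k => (-I) ^ i * (-I * ζ) ^ k / (k ! : ℂ)
  set P : ℝ → ℂ := fun x => ∑ k ∈ range m, c k * ((x ^ (i + k) * f x : ℝ) : ℂ)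
  have hA : Integrable (fun x : ℝ => (-I * x) ^ i * f x * exp (-I * ζ * x)) := by
    have hbdd : Integrable
        (fun x : ℝ => ((-I) ^ i * exp (-I * ζ * x)) * ((x ^ i * f x : ℝ) : ℂ)) :=
      (hint i hi).ofReal.bdd_mul (c := 1) (by fun_prop) (.of_forall fun x => by
        rw [norm_mul, norm_pow, norm_neg, norm_I, one_pow, one_mul,
          show -I * ζ * x = ((-(ζ * x) : ℝ) : ℂ) * I by push_cast; ring, norm_exp_ofReal_mul_I])
    convert hbdd using 2 with x
    push_cast
    ring
  have hP : Integrable P := integrable_sum_pow_mul (fun j hj => hint j hj.le) c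
  have hP0 : ∫ x, P x = 0 :=
    integral_sum_pow_mul_eq_zero (fun j hj => hint j hj.le) hmom c
  have hrem (x : ℝ) : (-I * x) ^ i * f x * exp (-I * ζ * x) - P x
      = (-I * x) ^ i * f x * expRemainder m (-I * ζ * x) := by
    simp only [P, c, expRemainder, mul_sub, mul_sum]
    congr 1
    refine sum_congr rfl fun k _ => ?_
    push_cast
    ring
  have hbound (x : ℝ) : ‖(-I * x) ^ i * f x * expRemainder m (-I * ζ * x)‖
      ≤ |ζ| ^ m / m ! * |x ^ (i + m) * f x| := by
    have hre : (-I * ζ * x).re ≤ 0 := by simp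
    calc _ ≤ |x| ^ i * |f x| * (‖-I * ζ * x‖ ^ m / m !) := by
          rw [norm_mul, norm_mul, norm_pow, norm_mul, norm_neg, norm_I, one_mul, norm_real,
            norm_real, Real.norm_eq_abs, Real.norm_eq_abs]
          gcongr
          exact norm_expRemainder_le hre m
      _ = |ζ| ^ m / m ! * |x ^ (i + m) * f x| := by
          simp only [norm_mul, norm_neg, norm_I, one_mul, norm_real, Real.norm_eq_abs, abs_mul,
            abs_pow]
          ring
  calc ‖iteratedDeriv i (fourierHat f) ζ‖
      = ‖∫ x, (-I * x) ^ i * f x * expRemainder m (-I * ζ * x)‖ := by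
        rw [iteratedDeriv_fourierHat (fun j hj => hint j (hj.trans hi)), ← sub_zero (∫ _, _ * _),
          ← hP0, ← integral_sub hA hP]
        simp_rw [hrem]
    _ ≤ ∫ x, |ζ| ^ m / m ! * |x ^ (i + m) * f x| :=
        norm_integral_le_of_norm_le ((hint _ le_rfl).abs.const_mul _) (.of_forall hbound)
    _ = |ζ| ^ m / m ! * ∫ x, |x ^ (i + m) * f x| := integral_const_mul _ _

theorem fourier_derivative_moment_bound_general (n : ℕ) :
    ∃ C > 0, ∀ f₀ : ℝ → ℝ,
      Integrable f₀ →
      Integrable (fun z => (1 + z ^ 2) ^ (((n : ℝ) + 1) / 2) * |f₀ z|) →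
      (∀ k < n, ∫ z : ℝ, z ^ k * f₀ z = 0) →
      ∀ i ≤ n, ∀ ζ : ℝ,
        ‖iteratedDeriv i (fourierHat f₀) ζ‖ ≤
          C * |ζ| ^ (n - i) * ∫ z : ℝ, |z ^ n * f₀ z| := by
  refine ⟨1, one_pos, fun f₀ hf₀ hw hmom i hi ζ => ?_⟩
  have hint (k : ℕ) (hk : k ≤ n) : Integrable (fun z => z ^ k * f₀ z) := by
    refine integrable_pow_mul_of_integrable_weight hf₀.1 hw ?_
    have : (k : ℝ) ≤ n := by exact_mod_cast hk
    linarith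
  calc _ ≤ |ζ| ^ (n - i) / (n - i)! * ∫ z, |z ^ n * f₀ z| :=
        norm_iteratedDeriv_fourierHat_le hi hint hmom ζ
    _ ≤ 1 * |ζ| ^ (n - i) * ∫ z, |z ^ n * f₀ z| := by
        rw [one_mul]
        gcongr
        exact div_le_self (by positivity) (mod_cast (n - i).factorial_pos)

/-- If `f₀ ∈ L¹` with weight `(1+z²)^{(n+1)/2}` and its first `n` moments vanish, then
`|∂_ζ^i f̂₀(ζ)| ≤ C |ζ|^{n-i} ‖z^n f₀‖_{L¹}` for `0 ≤ i ≤ n`, with `C = C(n)`. -/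
theorem fourier_derivative_moment_bound (n : ℕ) (hn : 1 ≤ n) :
    ∃ C > 0, ∀ f₀ : ℝ → ℝ,
      Integrable f₀ →
      Integrable (fun z => (1 + z ^ 2) ^ (((n : ℝ) + 1) / 2) * |f₀ z|) →
      (∀ k < n, ∫ z : ℝ, z ^ k * f₀ z = 0) →
      ∀ i ≤ n, ∀ ζ : ℝ,
        ‖iteratedDeriv i (fourierHat f₀) ζ‖ ≤
          C * |ζ| ^ (n - i) * ∫ z : ℝ, |z ^ n * f₀ z| :=
  fourier_derivative_moment_bound_general n
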